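/- arXiv:1701.01580 — 3 statements merged into one kernel-verified Lean document; each statement's English description precedes it below -/
import Mathlib

section
/- Let w be a closed word and x a letter. Then wx is closed if and only if wx has the same smallest period as w. -/
open scoped Classical

variable {α : Type*}

def IsBorder (u w : List α) : Prop := u <+: w ∧ u <:+ w ∧ u ≠ w

def InternalOcc (u w : List α) : Prop := ∃ p s : List α, p ≠ [] ∧ s ≠ [] ∧ w = p ++ u ++ s

def ClosedWord (w : List α) : Prop := w = [] ∨ ∃ u, IsBorder u w ∧ ¬ InternalOcc u w

noncomputable def minPer (w : List α) : ℕ :=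
  if w = [] then 1 else sInf {p | ∃ v, IsBorder v w ∧ p = w.length - v.length}

noncomputable def ocL (w : List α) : List ℕ :=
  (List.range w.length).map fun i => if ClosedWord (w.take (i+1)) then 1 else 0

def prefW (w : ℕ → α) (n : ℕ) : List α := (List.range n).map w

noncomputable def ocI (w : ℕ → α) : ℕ → ℕ := fun n =>
  if ClosedWord (prefW w (n+1)) then 1 else 0

def InfixAt (w : ℕ → α) (u : List α) (i : ℕ) : Prop :=
  u = (List.range u.length).map fun j => w (i + j)

def RecurrentWord (w : ℕ → α) : Prop :=
  ∀ u : List α, (∃ i, InfixAt w u i) → ∀ N, ∃ i, N ≤ i ∧ InfixAt w u i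

def UltPeriodic (s : ℕ → α) : Prop := ∃ p, 0 < p ∧ ∃ N, ∀ n, N ≤ n → s (n + p) = s n

def PerWord (s : ℕ → α) : Prop := ∃ p, 0 < p ∧ ∀ n, s (n + p) = s n

def OccurrenceAt (u w : List α) (i : ℕ) : Prop := i + u.length ≤ w.length ∧ u <+: w.drop i

def RepeatedIn (u w : List α) : Prop := ∃ i j, i < j ∧ OccurrenceAt u w i ∧ OccurrenceAt u w j

def CompleteReturnTo (w u : List α) : Prop :=
  u <+: w ∧ u <:+ w ∧ u ≠ w ∧ ∀ i, OccurrenceAt u w i → i = 0 ∨ i = w.length - u.length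

def BalancedWord (w : List Bool) : Prop :=
  ∀ u v : List Bool, u <:+: w → v <:+: w → u.length = v.length →
    ((u.count true : ℤ) - v.count true).natAbs ≤ 1

def RightSpecialSturmian (w : List Bool) : Prop := ∀ x : Bool, BalancedWord (w ++ [x])

def stdSeq (d : ℕ → ℕ) : ℕ → List Bool
  | 0 => [true]
  | 1 => [false]
  | n+2 => (List.replicate (d n) (stdSeq d (n+1))).flatten ++ stdSeq d n

def stdInf (d : ℕ → ℕ) : ℕ → Bool := fun i => (stdSeq d (i+2)).getD i false

def IsStandardWord (s : List Bool) : Prop :=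
  ∃ d : ℕ → ℕ, (∀ n, 1 ≤ n → 1 ≤ d n) ∧ ∃ m, s = stdSeq d m

def IsCentral (u : List Bool) : Prop := ∃ x y : Bool, x ≠ y ∧ IsStandardWord (u ++ [x, y])

def LeftSpecial (u w : List Bool) : Prop := (false :: u) <:+: w ∧ (true :: u) <:+: w

def RightSpecial (u w : List Bool) : Prop := (u ++ [false]) <:+: w ∧ (u ++ [true]) <:+: w

def IsSemicentral (v : List Bool) : Prop :=
  ∃ u : List Bool,
    (u <+: v ∧ RepeatedIn u v ∧ ∀ z, z <+: v → RepeatedIn z v → z.length ≤ u.length) ∧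
    (u <:+ v ∧ RepeatedIn u v ∧ ∀ z, z <:+ v → RepeatedIn z v → z.length ≤ u.length) ∧
    (LeftSpecial u v ∧ ∀ z, LeftSpecial z v → z.length ≤ u.length ∧ (z.length = u.length → z = u)) ∧
    (RightSpecial u v ∧ ∀ z, RightSpecial z v → z.length ≤ u.length ∧ (z.length = u.length → z = u))

def contFront : List ℕ → ℕ
  | [] => 1
  | [x] => x
  | x :: y :: l => x * contFront (y :: l) + contFront l

def paperK (l : List ℕ) : ℕ := contFront l.reverse

noncomputable def lbl (u : List α) : ℕ := sSup {n | ∃ v, IsBorder v u ∧ v.length = n}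

noncomputable def Bp (w : List α) (i : ℕ) : ℕ :=
  (Finset.range (i+1)).sup fun j => lbl (w.take j)

/-!
A border `u` of `w` without internal occurrence is the longest border of `w`, so
`minPer w = |w| - |u|`. Deleting the last letter of a border of `wx` gives a border of `w`, so
every border of `wx` has length at most `|u| + 1`, and the only one of that length is `ux`, which
has no internal occurrence in `wx` because `u` has none in `w`. Hence the periods agree exactly when
`ux` is a border of `wx`, and then `wx` is closed. Conversely, the border of a closed `wx` cannot
be as short as `u`: it would be a prefix of the suffix `u` of `w`, and so occur internally in `wx`.
-/

namespace IsBorder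

variable {u v w : List α}

lemma ne_nil (h : IsBorder u w) : w ≠ [] := by
  rintro rfl
  exact h.2.2 (List.prefix_nil.mp h.1)

lemma length_lt (h : IsBorder u w) : u.length < w.length :=
  lt_of_le_of_ne h.1.length_le fun hlen => h.2.2 (h.1.eq_of_length hlen)

lemma nil_of_ne_nil (hw : w ≠ []) : IsBorder [] w :=
  ⟨List.nil_prefix, List.nil_suffix, hw.symm⟩

lemma dropLast {x : α} (hw : w ≠ []) (h : IsBorder v (w ++ [x])) : IsBorder v.dropLast w := by
  have hlen : v.length < w.length + 1 := by simpa using h.length_lt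
  have hvw : v <+: w := (List.prefix_concat_iff.mp h.1).resolve_left fun hv => h.2.2 hv
  refine ⟨(List.dropLast_prefix v).trans hvw, ?_, fun heq => ?_⟩
  · rcases List.suffix_concat_iff.mp h.2.1 with rfl | ⟨t, rfl, ht⟩
    · exact List.nil_suffix
    · simpa using ht
  · have hdl := congrArg List.length heq
    have := List.length_pos_iff.mpr hw
    simp only [List.length_dropLast] at hdl
    omega

end IsBorder

section InternalOcc

variable {u v w : List α}

lemma InternalOcc.length_add_two_le (h : InternalOcc u w) : u.length + 2 ≤ w.length := by
  obtain ⟨p, s, hp, hs, rfl⟩ := h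
  have := List.length_pos_iff.mpr hp
  have := List.length_pos_iff.mpr hs
  simp only [List.length_append]
  omega

lemma InternalOcc.of_append_singleton {x : α} (h : InternalOcc (u ++ [x]) (w ++ [x])) :
    InternalOcc u w := by
  obtain ⟨p, s, hp, hs, hw⟩ := h
  obtain ⟨s', c, rfl⟩ := s.eq_nil_or_concat.resolve_left hs
  have hw' : w ++ [x] = (p ++ (u ++ [x]) ++ s') ++ [c] := by simp [hw]
  obtain ⟨rfl, -⟩ := List.append_inj' hw' rfl
  exact ⟨p, [x] ++ s', hp, by simp, by simp⟩

lemma internalOcc_append_singleton_of_prefix_of_isBorder {x : α} (hvu : v <+: u)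
    (hu : IsBorder u w) : InternalOcc v (w ++ [x]) := by
  obtain ⟨t, rfl⟩ := hvu
  obtain ⟨r, rfl⟩ := hu.2.1
  exact ⟨r, t ++ [x], fun hr => hu.2.2 (by simp [hr]), by simp, by simp⟩

/-- A longer border would have `u` as a proper suffix and would itself be a proper prefix of `w`,
making `u` an internal factor. -/
lemma IsBorder.length_le_of_not_internalOcc (hu : IsBorder u w) (hnu : ¬ InternalOcc u w)
    (hz : IsBorder v w) : v.length ≤ u.length := by
  by_contra! hlt
  obtain ⟨r, hr⟩ := List.suffix_of_suffix_length_le hu.2.1 hz.2.1 hlt.le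
  obtain ⟨t, ht⟩ := hz.1
  refine hnu ⟨r, t, ?_, ?_, ?_⟩
  · rintro rfl
    simp only [List.nil_append] at hr
    exact hlt.ne (by rw [hr])
  · rintro rfl
    exact hz.2.2 (by simpa using ht)
  · rw [← ht, ← hr, List.append_assoc]

end InternalOcc

section minPer

variable {u w : List α}

lemma minPer_eq_of_isBorder_of_not_internalOcc (hu : IsBorder u w) (hnu : ¬ InternalOcc u w) :
    minPer w = w.length - u.length := by
  rw [minPer, if_neg hu.ne_nil]
  refine le_antisymm (Nat.sInf_le ⟨u, hu, rfl⟩) (le_csInf ⟨_, u, hu, rfl⟩ ?_)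
  rintro _ ⟨v, hv, rfl⟩
  exact Nat.sub_le_sub_left (hu.length_le_of_not_internalOcc hnu hv) _

lemma exists_isBorder_minPer_eq (hw : w ≠ []) :
    ∃ v, IsBorder v w ∧ minPer w = w.length - v.length := by
  rw [minPer, if_neg hw]
  exact Nat.sInf_mem (s := {p | ∃ v, IsBorder v w ∧ p = w.length - v.length})
    ⟨w.length, [], IsBorder.nil_of_ne_nil hw, by simp⟩

end minPer

section AppendSingleton

variable {u v w : List α} {x : α}

lemma IsBorder.length_eq_succ_of_append_singleton (hu : IsBorder u w) (hnu : ¬ InternalOcc u w)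
    (hv : IsBorder v (w ++ [x])) (hnv : ¬ InternalOcc v (w ++ [x])) :
    v.length = u.length + 1 := by
  have hle : v.length ≤ u.length + 1 := by
    have := hu.length_le_of_not_internalOcc hnu (hv.dropLast hu.ne_nil)
    simp only [List.length_dropLast] at this
    omega
  refine le_antisymm hle (Nat.succ_le_of_lt (lt_of_not_ge fun hvu => hnv ?_))
  exact internalOcc_append_singleton_of_prefix_of_isBorder
    (List.prefix_of_prefix_length_le hv.1 (hu.1.trans (w.prefix_append [x])) hvu) hu

lemma IsBorder.not_internalOcc_of_append_singleton (hu : IsBorder u w) (hnu : ¬ InternalOcc u w)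
    (hv : IsBorder v (w ++ [x])) (hlen : v.length = u.length + 1) :
    ¬ InternalOcc v (w ++ [x]) := by
  have hux : u ++ [x] <:+ w ++ [x] := List.suffix_concat_iff.mpr (Or.inr ⟨u, rfl, hu.2.1⟩)
  have hv_eq : v = u ++ [x] :=
    (List.suffix_of_suffix_length_le hv.2.1 hux (by simp [hlen])).eq_of_length (by simp [hlen])
  exact fun h => hnu (hv_eq ▸ h).of_append_singleton

end AppendSingleton

theorem stmt2 {α : Type*} (w : List α) (h : ClosedWord w) (x : α) :
    ClosedWord (w ++ [x]) ↔ minPer (w ++ [x]) = minPer w := by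
  rcases eq_or_ne w [] with rfl | hw
  · have hb : IsBorder [] [x] := IsBorder.nil_of_ne_nil (List.cons_ne_nil x [])
    have hnb : ¬ InternalOcc [] [x] := fun hocc => by simpa using hocc.length_add_two_le
    rw [List.nil_append, minPer_eq_of_isBorder_of_not_internalOcc hb hnb]
    exact iff_of_true (Or.inr ⟨[], hb, hnb⟩) (by simp [minPer])
  obtain ⟨u, hu, hnu⟩ := h.resolve_left hw
  rw [minPer_eq_of_isBorder_of_not_internalOcc hu hnu]
  constructor
  · rintro (hwx | ⟨v, hv, hnv⟩)
    · simp at hwx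
    rw [minPer_eq_of_isBorder_of_not_internalOcc hv hnv,
      hu.length_eq_succ_of_append_singleton hnu hv hnv, List.length_append]
    simp
  · intro hper
    obtain ⟨v, hv, hvper⟩ := exists_isBorder_minPer_eq (w := w ++ [x]) (by simp)
    have hlen : v.length = u.length + 1 := by
      have := hu.length_lt
      have := hv.length_lt
      rw [hvper, List.length_append, List.length_singleton] at hper
      simp only [List.length_append, List.length_singleton] at this
      omega
    exact Or.inr ⟨v, hv, hu.not_internalOcc_of_append_singleton hnu hv hlen⟩
end

section
/- If w is a finite word admitting a border of length ℓ, then the number of 1s in the oc-sequence of w is at least ℓ+1. -/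
open scoped Classical

variable {α : Type*}

/- For each `m ≤ ℓ`, the shortest prefix of `w` having a border of length at least `m` is
closed, since an internal occurrence of such a border would end a shorter prefix with the same
border. Chopping the last letter off a border of length `m + 1` leaves one of length `m`, so these
shortest prefixes grow strictly with `m`, giving `ℓ + 1` distinct closed prefixes. -/

lemma IsBorder.length_lt_s5 {u w : List α} (h : IsBorder u w) : u.length < w.length :=
  lt_of_le_of_ne h.1.length_le fun he => h.2.2 (h.1.eq_of_length he)

lemma not_isBorder_nil (u : List α) : ¬ IsBorder u ([] : List α) :=
  fun h => h.2.2 (List.prefix_nil.mp h.1)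

def HasBorderAtLeast (m : ℕ) (w : List α) : Prop := ∃ u, IsBorder u w ∧ m ≤ u.length

lemma HasBorderAtLeast.mono {m m' : ℕ} {w : List α} (hm : m ≤ m') (h : HasBorderAtLeast m' w) :
    HasBorderAtLeast m w :=
  let ⟨u, hu, hlen⟩ := h
  ⟨u, hu, hm.trans hlen⟩

lemma HasBorderAtLeast.dropLast {m : ℕ} {w : List α} (h : HasBorderAtLeast (m + 1) w) :
    HasBorderAtLeast m w.dropLast := by
  obtain ⟨u, hu, hlen⟩ := h
  have hu_ne : u ≠ [] := List.ne_nil_of_length_pos (by omega)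
  have hlt := hu.length_lt_s5
  refine ⟨u.dropLast, ⟨?_, ?_, fun he => ?_⟩, by simp only [List.length_dropLast]; omega⟩
  · rw [List.dropLast_eq_take (l := w), List.prefix_take_iff]
    exact ⟨(List.dropLast_prefix u).trans hu.1, by simp only [List.length_dropLast]; omega⟩
  · obtain ⟨t, rfl⟩ := hu.2.1
    rw [List.dropLast_append_of_ne_nil hu_ne]
    exact List.suffix_append t _
  · have := congrArg List.length he
    simp only [List.length_dropLast] at this
    omega

lemma isBorder_take_of_internalOcc {u w : List α} (hu : u <+: w) (hocc : InternalOcc u w) :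
    ∃ n < w.length, IsBorder u (w.take n) := by
  obtain ⟨p, s, hp, hs, rfl⟩ := hocc
  refine ⟨(p ++ u).length, by simp [List.length_pos_iff.mpr hs], ?_⟩
  rw [List.take_left]
  refine ⟨List.prefix_of_prefix_length_le hu (List.prefix_append _ s) (by simp),
    List.suffix_append p u, fun he => hp ?_⟩
  simpa using congrArg List.length he

lemma closedWord_of_forall_take_not_hasBorderAtLeast {m : ℕ} {w : List α}
    (h : HasBorderAtLeast m w) (hmin : ∀ n < w.length, ¬ HasBorderAtLeast m (w.take n)) :
    ClosedWord w := by
  obtain ⟨u, hu, hlen⟩ := h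
  refine Or.inr ⟨u, hu, fun hocc => ?_⟩
  obtain ⟨n, hn, hbord⟩ := isBorder_take_of_internalOcc hu.1 hocc
  exact hmin n hn ⟨u, hbord, hlen⟩

lemma count_one_ocL (w : List α) :
    (ocL w).count 1 = ((Finset.range w.length).filter fun i => ClosedWord (w.take (i + 1))).card := by
  rw [ocL, List.count_eq_countP, List.countP_map, List.countP_eq_length_filter, Finset.card_def,
    Finset.filter_val, Finset.range_val, Multiset.range, Multiset.filter_coe, Multiset.coe_card]
  congr 2
  ext i
  by_cases h : ClosedWord (w.take (i + 1)) <;> simp [h]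

noncomputable def shortestPrefixWithBorderAtLeast (w : List α) (m : ℕ) : ℕ :=
  sInf {n | HasBorderAtLeast m (w.take n)}

section ShortestPrefix

variable {w : List α} {m : ℕ}

local notation "S" => shortestPrefixWithBorderAtLeast

lemma hasBorderAtLeast_take_shortest (h : HasBorderAtLeast m w) :
    HasBorderAtLeast m (w.take (S w m)) :=
  Nat.sInf_mem (s := {n | HasBorderAtLeast m (w.take n)})
    ⟨w.length, show HasBorderAtLeast m (w.take w.length) by rwa [List.take_length]⟩

lemma shortest_le {n : ℕ} (h : HasBorderAtLeast m (w.take n)) : S w m ≤ n :=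
  Nat.sInf_le h

lemma not_hasBorderAtLeast_take_of_lt_shortest {n : ℕ} (hn : n < S w m) :
    ¬ HasBorderAtLeast m (w.take n) :=
  Nat.notMem_of_lt_sInf hn

lemma shortest_le_length (h : HasBorderAtLeast m w) : S w m ≤ w.length :=
  shortest_le (by rwa [List.take_length])

lemma shortest_pos (h : HasBorderAtLeast m w) : 0 < S w m := by
  obtain ⟨u, hu, -⟩ := hasBorderAtLeast_take_shortest h
  refine Nat.pos_of_ne_zero fun h0 => ?_
  rw [h0, List.take_zero] at hu
  exact not_isBorder_nil u hu

lemma closedWord_take_shortest (h : HasBorderAtLeast m w) : ClosedWord (w.take (S w m)) := by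
  refine closedWord_of_forall_take_not_hasBorderAtLeast (hasBorderAtLeast_take_shortest h)
    fun n hn => ?_
  rw [List.length_take] at hn
  rw [List.take_take, min_eq_left (by omega)]
  exact not_hasBorderAtLeast_take_of_lt_shortest (by omega)

lemma shortest_lt_shortest_succ (h : HasBorderAtLeast (m + 1) w) : S w m < S w (m + 1) := by
  have hshorter := (hasBorderAtLeast_take_shortest h).dropLast
  rw [List.dropLast_eq_take, List.take_take, List.length_take,
    min_eq_left (shortest_le_length h), min_eq_left (Nat.sub_le _ _)] at hshorter
  have := shortest_le hshorter
  have := shortest_pos h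
  omega

lemma strictMonoOn_shortest {ℓ : ℕ} (h : HasBorderAtLeast ℓ w) : StrictMonoOn (S w) (Set.Iic ℓ) :=
  strictMonoOn_Iic_of_lt_succ fun _ hm => shortest_lt_shortest_succ (h.mono hm)

end ShortestPrefix

theorem stmt5 {α : Type*} (w : List α) (ℓ : ℕ) (h : ∃ v, IsBorder v w ∧ v.length = ℓ) :
    ℓ + 1 ≤ (ocL w).count 1 := by
  obtain ⟨v, hv, rfl⟩ := h
  have hw : HasBorderAtLeast v.length w := ⟨v, hv, le_rfl⟩
  have hwm : ∀ m ∈ Finset.range (v.length + 1), HasBorderAtLeast m w :=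
    fun m hm => hw.mono (Nat.lt_succ_iff.mp (Finset.mem_range.mp hm))
  rw [count_one_ocL, ← Finset.card_range (v.length + 1)]
  refine Finset.card_le_card_of_injOn (fun m => shortestPrefixWithBorderAtLeast w m - 1)
    (fun m hm => ?_) (fun a ha b hb hab => ?_)
  · have hpos := shortest_pos (hwm m hm)
    simp only [Finset.coe_filter, Set.mem_ofPred_eq, Finset.mem_range, Nat.sub_add_cancel hpos]
    exact ⟨by have := shortest_le_length (hwm m hm); omega, closedWord_take_shortest (hwm m hm)⟩
  · have := shortest_pos (hwm a ha)
    have := shortest_pos (hwm b hb)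
    refine (strictMonoOn_shortest hw).injOn ?_ ?_ (by simp only at hab; omega)
    · simpa [Nat.lt_succ_iff] using ha
    · simpa [Nat.lt_succ_iff] using hb
end

section
/- For an infinite word w over a finite alphabet, the oc-sequence oc(w) is ultimately periodic if and only if w is either (purely) periodic or not recurrent. Moreover, if w is periodic then oc(w) ends in 1^ω, and if w is not recurrent then oc(w) ends in 0^ω. -/
open scoped Classical

variable {α : Type*}

/-!
Write `r k` for the first return time of the prefix of length `k`: the least `i ≥ 1` at which that
prefix occurs again. A prefix of length `n ≥ 2` is closed exactly when `n = r k + k` for some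
`k ≥ 1` whose prefix returns: its complete-return border is the prefix of length `k`.

If `w` has period `d`, then `r` is monotone and bounded by `d`, hence eventually equal to some `R`,
and every long prefix is closed. If `w` is not recurrent, some prefix never returns, so neither does
any longer one, and only finitely many lengths `r k + k` are closed.

If `w` is recurrent, `k ↦ r k + k` is strictly increasing and enumerates the closed lengths. If
`oc(w)` is ultimately periodic with period `p`, consecutive closed lengths are eventually at most
`p` apart, so `r (k + 1) - r k < p` eventually. Either some increment `δ > 0` occurs infinitely
often, and then `δ` is a period of `w`, or `r` is eventually constant `R`, and then `R` is one.
-/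

open Filter

theorem exists_mem_Ioc_eq_of_periodic_from {β : Type*} {s : ℕ → β} {N p n₀ : ℕ} (hp : 0 < p)
    (hper : ∀ n, N ≤ n → s (n + p) = s n) (hn₀ : N ≤ n₀) :
    ∀ a, n₀ ≤ a → ∃ n ∈ Set.Ioc a (a + p), s n = s n₀ := by
  intro a ha
  induction a, ha using Nat.le_induction with
  | base => exact ⟨n₀ + p, ⟨by omega, le_rfl⟩, hper n₀ hn₀⟩
  | succ a ha ih =>
    obtain ⟨n, ⟨hlt, hle⟩, hn⟩ := ih
    rcases Nat.lt_or_ge (a + 1) n with h | h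
    · exact ⟨n, ⟨h, by omega⟩, hn⟩
    · exact ⟨n + p, ⟨by omega, by omega⟩, (hper n (by omega)).trans hn⟩

theorem ultPeriodic_of_eventually_eq {β : Type*} {s : ℕ → β} {c : β}
    (h : ∀ᶠ n in atTop, s n = c) : UltPeriodic s := by
  obtain ⟨N, hN⟩ := eventually_atTop.1 h
  exact ⟨1, one_pos, N, fun n hn => (hN _ (by omega)).trans (hN n hn).symm⟩

section OcSequence

def PrefixOccursAt (w : ℕ → α) (k i : ℕ) : Prop := ∀ j < k, w (i + j) = w j

def PrefixReturns (w : ℕ → α) (k : ℕ) : Prop := ∃ i, 0 < i ∧ PrefixOccursAt w k i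

-- `0` (that is, `sInf ∅`) when the prefix never returns.
noncomputable def returnTime (w : ℕ → α) (k : ℕ) : ℕ := sInf {i | 0 < i ∧ PrefixOccursAt w k i}

variable {w : ℕ → α} {k m n i j t d : ℕ}

theorem prefixOccursAt_iff_prefW :
    PrefixOccursAt w k i ↔ prefW (fun j => w (i + j)) k = prefW w k := by
  simp [PrefixOccursAt, prefW, List.map_inj_left]

theorem prefW_add (w : ℕ → α) (a b : ℕ) :
    prefW w (a + b) = prefW w a ++ prefW (fun j => w (a + j)) b := by
  simp [prefW, List.range_add]

@[simp] theorem prefW_length (w : ℕ → α) (n : ℕ) : (prefW w n).length = n := by simp [prefW]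

theorem PrefixOccursAt.mono (h : PrefixOccursAt w k i) (hmk : m ≤ k) : PrefixOccursAt w m i :=
  fun j hj => h j (by omega)

theorem PrefixReturns.mono (h : PrefixReturns w k) (hmk : m ≤ k) : PrefixReturns w m :=
  let ⟨i, hi, hocc⟩ := h; ⟨i, hi, hocc.mono hmk⟩

theorem returnTime_pos_iff : 0 < returnTime w k ↔ PrefixReturns w k :=
  ⟨fun h => Nat.nonempty_of_pos_sInf h, fun h => (Nat.sInf_mem h).1⟩

theorem PrefixReturns.prefixOccursAt_returnTime (h : PrefixReturns w k) :
    PrefixOccursAt w k (returnTime w k) :=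
  (Nat.sInf_mem h).2

theorem returnTime_le (hi : 0 < i) (h : PrefixOccursAt w k i) : returnTime w k ≤ i :=
  Nat.sInf_le ⟨hi, h⟩

theorem not_prefixOccursAt_of_lt_returnTime (hi : 0 < i) (h : i < returnTime w k) :
    ¬ PrefixOccursAt w k i :=
  fun hocc => Nat.notMem_of_lt_sInf h ⟨hi, hocc⟩

theorem returnTime_mono_of_prefixReturns (h : PrefixReturns w k) (hmk : m ≤ k) :
    returnTime w m ≤ returnTime w k :=
  returnTime_le (returnTime_pos_iff.2 h) (h.prefixOccursAt_returnTime.mono hmk)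

theorem prefW_prefix (h : k ≤ n) : prefW w k <+: prefW w n := by
  obtain ⟨m, rfl⟩ := Nat.exists_eq_add_of_le h
  rw [prefW_add]
  exact List.prefix_append _ _

theorem prefix_prefW_iff {u : List α} : u <+: prefW w n ↔ ∃ k ≤ n, u = prefW w k := by
  refine ⟨fun h => ⟨u.length, by simpa using h.length_le, ?_⟩, ?_⟩
  · have hk : u.length ≤ n := by simpa using h.length_le
    exact (List.prefix_of_prefix_length_le h (prefW_prefix hk) (by simp)).eq_of_length (by simp)
  · rintro ⟨k, hk, rfl⟩
    exact prefW_prefix hk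

theorem prefW_suffix_prefW_iff :
    prefW w k <:+ prefW w n ↔ k ≤ n ∧ PrefixOccursAt w k (n - k) := by
  constructor
  · intro h
    have hk : k ≤ n := by simpa using h.length_le
    obtain ⟨m, rfl⟩ := Nat.exists_eq_add_of_le' hk
    have hsuf : prefW (fun j => w (m + j)) k <:+ prefW w (m + k) := by
      rw [prefW_add]; exact List.suffix_append _ _
    refine ⟨hk, prefixOccursAt_iff_prefW.2 ?_⟩
    rw [Nat.add_sub_cancel]
    exact ((List.suffix_of_suffix_length_le hsuf h (by simp)).eq_of_length (by simp))
  · rintro ⟨hk, hocc⟩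
    obtain ⟨m, rfl⟩ := Nat.exists_eq_add_of_le' hk
    rw [Nat.add_sub_cancel, prefixOccursAt_iff_prefW] at hocc
    rw [prefW_add, hocc]
    exact List.suffix_append _ _

theorem internalOcc_prefW_iff :
    InternalOcc (prefW w k) (prefW w n) ↔ ∃ t, 0 < t ∧ t + k < n ∧ PrefixOccursAt w k t := by
  constructor
  · rintro ⟨p, s, hp, hs, heq⟩
    have hn : n = p.length + k + s.length := by simpa [add_assoc] using congrArg List.length heq
    rw [hn, prefW_add, prefW_add] at heq
    obtain ⟨hpu, -⟩ := List.append_inj heq.symm (by simp)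
    obtain ⟨-, hu⟩ := List.append_inj hpu (by simp)
    refine ⟨p.length, List.length_pos_iff.2 hp, ?_, prefixOccursAt_iff_prefW.2 hu.symm⟩
    have := List.length_pos_iff.2 hs
    omega
  · rintro ⟨t, ht, htn, hocc⟩
    obtain ⟨m, rfl⟩ := Nat.exists_eq_add_of_lt htn
    rw [prefixOccursAt_iff_prefW] at hocc
    refine ⟨prefW w t, prefW (fun j => w (t + k + j)) (m + 1), ?_, ?_, ?_⟩
    · simpa [← List.length_pos_iff] using ht
    · simp [← List.length_pos_iff]
    · rw [add_assoc (t + k), prefW_add w (t + k), prefW_add w t, hocc]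

theorem closedWord_prefW_iff (hn : 2 ≤ n) :
    ClosedWord (prefW w n) ↔ ∃ k, 0 < k ∧ PrefixReturns w k ∧ returnTime w k + k = n := by
  constructor
  · rintro (hnil | ⟨u, ⟨hpre, hsuf, hne⟩, hint⟩)
    · have := congrArg List.length hnil
      simp only [prefW_length, List.length_nil] at this
      omega
    obtain ⟨k, hkn, rfl⟩ := prefix_prefW_iff.1 hpre
    have hk : 0 < k := by
      refine Nat.pos_of_ne_zero fun hk0 =>
        hint (internalOcc_prefW_iff.2 ⟨1, one_pos, by omega, fun j hj => by omega⟩)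
    have hkn : k < n := lt_of_le_of_ne hkn fun h => hne (h ▸ rfl)
    have hocc := (prefW_suffix_prefW_iff.1 hsuf).2
    have hret : PrefixReturns w k := ⟨n - k, by omega, hocc⟩
    refine ⟨k, hk, hret, ?_⟩
    have hle := returnTime_le (by omega) hocc
    have hge : ¬ returnTime w k < n - k := fun hlt =>
      hint (internalOcc_prefW_iff.2 ⟨returnTime w k, returnTime_pos_iff.2 hret, by omega,
        hret.prefixOccursAt_returnTime⟩)
    omega
  · rintro ⟨k, hk, hret, rfl⟩
    have hr := returnTime_pos_iff.2 hret
    refine Or.inr ⟨prefW w k, ⟨prefW_prefix (by omega), ?_, ?_⟩, ?_⟩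
    · exact prefW_suffix_prefW_iff.2 ⟨by omega, by simpa using hret.prefixOccursAt_returnTime⟩
    · exact fun h => by simpa [hr.ne'] using congrArg List.length h
    · rintro (hint : InternalOcc _ _)
      obtain ⟨t, ht, htk, hocc⟩ := internalOcc_prefW_iff.1 hint
      exact not_prefixOccursAt_of_lt_returnTime ht (by omega) hocc

theorem ocI_eq_one_iff (hn : 0 < n) :
    ocI w n = 1 ↔ ∃ k, 0 < k ∧ PrefixReturns w k ∧ returnTime w k + k = n + 1 := by
  rw [← closedWord_prefW_iff (by omega), ocI]
  split_ifs with h <;> simp [h]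

theorem ocI_eq_zero_iff_ne_one : ocI w n = 0 ↔ ocI w n ≠ 1 := by
  rw [ocI]
  split_ifs <;> simp

theorem PrefixOccursAt.shift (h₁ : PrefixOccursAt w k i) (h₂ : PrefixOccursAt w m (i + d)) :
    PrefixOccursAt w (min m (k - d)) d := fun j hj => by
  rw [← h₁ (d + j) (by omega), ← add_assoc]
  exact h₂ j (by omega)

theorem infixAt_prefW_iff : InfixAt w (prefW w k) i ↔ PrefixOccursAt w k i := by
  rw [prefixOccursAt_iff_prefW, InfixAt, prefW_length, eq_comm]
  rfl

theorem InfixAt.shift {u : List α} (hu : InfixAt w u j)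
    (hocc : PrefixOccursAt w (j + u.length) t) : InfixAt w u (t + j) := by
  rw [InfixAt] at hu ⊢
  conv_lhs => rw [hu]
  refine List.map_congr_left fun x hx => ?_
  rw [add_assoc, hocc (j + x) (by simp at hx; omega)]

theorem recurrentWord_iff_forall_prefixReturns : RecurrentWord w ↔ ∀ k, PrefixReturns w k := by
  refine ⟨fun h k => ?_, fun h u ⟨i, hu⟩ N => ?_⟩
  · obtain ⟨i, hi, hocc⟩ := h (prefW w k) ⟨0, infixAt_prefW_iff.2 fun j _ => by simp⟩ 1
    exact ⟨i, hi, infixAt_prefW_iff.1 hocc⟩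
  · induction N with
    | zero => exact ⟨i, Nat.zero_le _, hu⟩
    | succ N ih =>
      obtain ⟨j, hj, hu⟩ := ih
      obtain ⟨t, ht, hocc⟩ := h (j + u.length)
      exact ⟨t + j, by omega, hu.shift hocc⟩

theorem perWord_iff_exists_forall_prefixOccursAt :
    PerWord w ↔ ∃ d, 0 < d ∧ ∀ k, PrefixOccursAt w k d := by
  refine ⟨fun ⟨d, hd, h⟩ => ⟨d, hd, fun k j _ => ?_⟩, fun ⟨d, hd, h⟩ => ⟨d, hd, fun n => ?_⟩⟩
  · rw [add_comm]; exact h j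
  · rw [add_comm]; exact h (n + 1) n (by omega)

theorem perWord_of_eventually_returnTime_eq {R : ℕ} (hR : 0 < R)
    (h : ∀ᶠ k in atTop, returnTime w k = R) : PerWord w := by
  refine perWord_iff_exists_forall_prefixOccursAt.2 ⟨R, hR, fun k => ?_⟩
  obtain ⟨m, hm, hkm⟩ := (h.and (eventually_ge_atTop k)).exists
  have hret : PrefixReturns w m := returnTime_pos_iff.1 (hm ▸ hR)
  exact hm ▸ hret.prefixOccursAt_returnTime.mono hkm

theorem PerWord.eventually_ocI_eq_one (h : PerWord w) : ∀ᶠ n in atTop, ocI w n = 1 := by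
  obtain ⟨d, hd, hocc⟩ := perWord_iff_exists_forall_prefixOccursAt.1 h
  have hret : ∀ k, PrefixReturns w k := fun k => ⟨d, hd, hocc k⟩
  have hmono : Monotone (returnTime w) := fun k m hkm =>
    returnTime_mono_of_prefixReturns (hret m) hkm
  have hbdd : BddAbove (Set.range (returnTime w)) :=
    ⟨d, by rintro _ ⟨k, rfl⟩; exact returnTime_le hd (hocc k)⟩
  -- in the discrete space `ℕ`, convergence to the supremum means eventual equality with it
  have hlim := tendsto_atTop_ciSup hmono hbdd
  rw [nhds_discrete, tendsto_pure, eventually_atTop] at hlim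
  obtain ⟨K, hK⟩ := hlim
  have hR : 0 < ⨆ k, returnTime w k := hK K le_rfl ▸ returnTime_pos_iff.2 (hret K)
  refine eventually_atTop.2 ⟨K + ⨆ k, returnTime w k, fun n hn => (ocI_eq_one_iff (by omega)).2
    ⟨n + 1 - ⨆ k, returnTime w k, by omega, hret _, ?_⟩⟩
  rw [hK _ (by omega)]
  omega

theorem eventually_ocI_eq_zero_of_not_recurrentWord (h : ¬ RecurrentWord w) :
    ∀ᶠ n in atTop, ocI w n = 0 := by
  obtain ⟨L, hL⟩ : ∃ L, ¬ PrefixReturns w L := by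
    simpa [recurrentWord_iff_forall_prefixReturns] using h
  set B := (Finset.range L).sup fun k => returnTime w k + k
  refine eventually_atTop.2 ⟨B + 1, fun n hn => ocI_eq_zero_iff_ne_one.2 fun h₁ => ?_⟩
  obtain ⟨k, -, hret, hk⟩ := (ocI_eq_one_iff (by omega)).1 h₁
  have hkL : k < L := lt_of_not_ge fun hLk => hL (hret.mono hLk)
  have := Finset.le_sup (f := fun k => returnTime w k + k) (Finset.mem_range.2 hkL)
  omega

theorem eventually_returnTime_succ_lt {N p : ℕ} (hret : ∀ k, PrefixReturns w k) (hp : 0 < p)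
    (hper : ∀ n, N ≤ n → ocI w (n + p) = ocI w n) :
    ∀ᶠ k in atTop, returnTime w (k + 1) < returnTime w k + p := by
  have hpos : ∀ k, 0 < returnTime w k := fun k => returnTime_pos_iff.2 (hret k)
  have hg : StrictMono fun k => returnTime w k + k := strictMono_nat_of_lt_succ fun k => by
    have := returnTime_mono_of_prefixReturns (hret (k + 1)) k.le_succ
    omega
  have hclosed : ∀ k, 0 < k → ocI w (returnTime w k + k - 1) = 1 := fun k hk =>
    (ocI_eq_one_iff (by have := hpos k; omega)).2 ⟨k, hk, hret k, by have := hpos k; omega⟩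
  refine eventually_atTop.2 ⟨N + 1, fun k hk => ?_⟩
  have hgN := hg.monotone hk
  obtain ⟨n, ⟨hlt, hle⟩, hn⟩ := exists_mem_Ioc_eq_of_periodic_from hp hper
    (n₀ := returnTime w (N + 1) + (N + 1) - 1) (by omega) (returnTime w k + k - 1)
    (by omega)
  rw [hclosed (N + 1) (by omega)] at hn
  obtain ⟨m, -, -, hm⟩ := (ocI_eq_one_iff (by omega)).1 hn
  have hkm : k < m := hg.lt_iff_lt.1 (by have := hpos k; omega)
  have : returnTime w (k + 1) + (k + 1) ≤ returnTime w m + m := hg.monotone hkm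
  omega

theorem RecurrentWord.perWord_of_ultPeriodic_ocI (hrec : RecurrentWord w)
    (hup : UltPeriodic (ocI w)) : PerWord w := by
  obtain ⟨p, hp, N, hper⟩ := hup
  have hret := recurrentWord_iff_forall_prefixReturns.1 hrec
  have hgap := eventually_returnTime_succ_lt hret hp hper
  by_cases hfreq : ∃ δ, 0 < δ ∧ ∃ᶠ k in atTop, returnTime w (k + 1) = returnTime w k + δ
  · obtain ⟨δ, hδ, hfreq⟩ := hfreq
    refine perWord_iff_exists_forall_prefixOccursAt.2 ⟨δ, hδ, fun m => ?_⟩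
    obtain ⟨k, hk, hrk⟩ := frequently_atTop.1 hfreq (m + δ)
    have h₂ := (hret (k + 1)).prefixOccursAt_returnTime
    rw [hrk] at h₂
    exact ((hret k).prefixOccursAt_returnTime.shift h₂).mono (by omega)
  · push Not at hfreq
    have hstab : ∀ᶠ k in atTop, returnTime w (k + 1) = returnTime w k := by
      filter_upwards [hgap, (eventually_all_finset (Finset.Ioo 0 p)).2 fun δ hδ =>
        hfreq δ (Finset.mem_Ioo.1 hδ).1] with k hk hne
      have := returnTime_mono_of_prefixReturns (hret (k + 1)) k.le_succ
      by_contra h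
      exact hne (returnTime w (k + 1) - returnTime w k) (Finset.mem_Ioo.2 ⟨by omega, by omega⟩)
        (by omega)
    obtain ⟨K, hK⟩ :=
      eventuallyConst_atTop.1 (eventuallyConst_atTop_nat.2 (eventually_atTop.1 hstab))
    exact perWord_of_eventually_returnTime_eq (returnTime_pos_iff.2 (hret K))
      (eventually_atTop.2 ⟨K, hK⟩)

end OcSequence

theorem stmt8_general {α : Type*} (w : ℕ → α) :
    (UltPeriodic (ocI w) ↔ (PerWord w ∨ ¬ RecurrentWord w)) ∧
    (PerWord w → ∃ N, ∀ n, N ≤ n → ocI w n = 1) ∧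
    (¬ RecurrentWord w → ∃ N, ∀ n, N ≤ n → ocI w n = 0) := by
  refine ⟨⟨fun hup => ?_, ?_⟩, fun h => eventually_atTop.1 h.eventually_ocI_eq_one,
    fun h => eventually_atTop.1 (eventually_ocI_eq_zero_of_not_recurrentWord h)⟩
  · by_cases hrec : RecurrentWord w
    exacts [Or.inl (hrec.perWord_of_ultPeriodic_ocI hup), Or.inr hrec]
  · rintro (h | h)
    exacts [ultPeriodic_of_eventually_eq h.eventually_ocI_eq_one,
      ultPeriodic_of_eventually_eq (eventually_ocI_eq_zero_of_not_recurrentWord h)]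

theorem stmt8 {α : Type*} [Fintype α] (w : ℕ → α) :
    (UltPeriodic (ocI w) ↔ (PerWord w ∨ ¬ RecurrentWord w)) ∧
    (PerWord w → ∃ N, ∀ n, N ≤ n → ocI w n = 1) ∧
    (¬ RecurrentWord w → ∃ N, ∀ n, N ≤ n → ocI w n = 0) :=
  stmt8_general w
end
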